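/- arXiv:2408.15723 — 2 statements merged into one kernel-verified Lean document; each statement's English description precedes it below -/
import Mathlib

section
/- The function β(a) = [ψ(3/2−a) − ψ(1−a)] / B(a,1−a) is strictly increasing from (0,1) onto (0,1), where B is the beta function and ψ the digamma function. In particular β(1/2) = (log 4)/π. -/
open Real Filter Set

noncomputable def poch (x : ℝ) (n : ℕ) : ℝ := (ascPochhammer ℝ n).eval x

noncomputable def hyp (a b c x : ℝ) : ℝ :=
  ∑' n : ℕ, poch a n * poch b n / (poch c n * n.factorial) * x ^ n

noncomputable def digamma (x : ℝ) : ℝ := deriv Real.Gamma x / Real.Gamma x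

noncomputable def Beta (x y : ℝ) : ℝ := Real.Gamma x * Real.Gamma y / Real.Gamma (x + y)

noncomputable def betaFn (a : ℝ) : ℝ :=
  (digamma (3 / 2 - a) - digamma (1 - a)) / Beta a (1 - a)

lemma summable_sq_shift {c : ℝ} (hc : 0 < c) : Summable (fun k : ℕ => 1 / (c + k) ^ 2) := by
  have h : Summable (fun k : ℕ => (1 / min c 1 ^ 2) * (1 / (k + 1 : ℝ) ^ 2)) := by
    apply Summable.mul_left
    exact_mod_cast (summable_nat_add_iff 1).mpr (Real.summable_one_div_nat_pow.mpr one_lt_two)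
  apply h.of_nonneg_of_le (fun k => by positivity)
  intro k
  have hm : 0 < min c 1 := lt_min hc one_pos
  have hk : (0:ℝ) ≤ k := Nat.cast_nonneg k
  have h1 : min c 1 * (k + 1) ≤ c + k := by
    have h2 := min_le_left c (1:ℝ)
    have h3 := min_le_right c (1:ℝ)
    nlinarith
  rw [one_div, one_div, one_div, ← mul_inv]
  rw [inv_le_inv₀ (by positivity) (by positivity)]
  calc min c 1 ^2 * (k+1)^2 = (min c 1 * (k+1))^2 := by ring
  _ ≤ (c+k)^2 := by apply pow_le_pow_left₀ (by positivity) h1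


noncomputable def G (x : ℝ) : ℝ := ∑' k : ℕ, (1 / (x + k) - 1 / (x + k + 1/2))

noncomputable def T (x : ℝ) : ℝ := ∑' k : ℕ, (1 / (x + k) ^ 2 - 1 / (x + k + 1/2) ^ 2)

lemma Gterm_pos {x : ℝ} (hx : 0 < x) (k : ℕ) : 0 < 1 / (x + k) - 1 / (x + k + 1/2) := by
  have h1 : (0:ℝ) < x + k := by positivity
  rw [sub_pos, div_lt_div_iff₀ (by linarith) h1]
  linarith

lemma Tterm_pos {x : ℝ} (hx : 0 < x) (k : ℕ) : 0 < 1 / (x + k) ^ 2 - 1 / (x + k + 1/2) ^ 2 := by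
  have h1 : (0:ℝ) < x + k := by positivity
  rw [sub_pos, div_lt_div_iff₀ (by positivity) (by positivity)]
  nlinarith

lemma summable_G {x : ℝ} (hx : 0 < x) :
    Summable (fun k : ℕ => 1 / (x + k) - 1 / (x + k + 1/2)) := by
  apply (summable_sq_shift hx).of_nonneg_of_le (fun k => (Gterm_pos hx k).le)
  intro k
  have h1 : (0:ℝ) < x + k := by positivity
  rw [div_sub_div _ _ (by linarith) (by linarith), div_le_div_iff₀ (by nlinarith) (by positivity)]
  ring_nf
  nlinarith

lemma summable_T {x : ℝ} (hx : 0 < x) :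
    Summable (fun k : ℕ => 1 / (x + k) ^ 2 - 1 / (x + k + 1/2) ^ 2) := by
  apply (summable_sq_shift hx).of_nonneg_of_le (fun k => (Tterm_pos hx k).le)
  intro k
  have h1 : (0:ℝ) < x + k := by positivity
  have h2 : (0:ℝ) < 1 / (x + k + 1/2)^2 := by positivity
  linarith

lemma G_pos {x : ℝ} (hx : 0 < x) : 0 < G x :=
  Summable.tsum_pos (summable_G hx) (fun k => (Gterm_pos hx k).le) 0 (Gterm_pos hx 0)

lemma T_pos {x : ℝ} (hx : 0 < x) : 0 < T x :=
  Summable.tsum_pos (summable_T hx) (fun k => (Tterm_pos hx k).le) 0 (Tterm_pos hx 0)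

lemma hasDerivAt_inv_aff {c x : ℝ} (hcx : x + c ≠ 0) :
    HasDerivAt (fun y : ℝ => 1 / (y + c)) (-(1 / (x + c) ^ 2)) x := by
  have h := ((hasDerivAt_id x).add_const c).inv hcx
  simp only [one_div] at h ⊢
  refine h.congr_deriv ?_
  simp only [id]
  ring

lemma hasDerivAt_G {x : ℝ} (hx : 0 < x) : HasDerivAt G (-T x) x := by
  set g : ℕ → ℝ → ℝ := fun k y => 1 / (y + k) - 1 / (y + k + 1/2) with hgdef
  set g' : ℕ → ℝ → ℝ := fun k y => (-(1 / (y + k) ^ 2)) - (-(1 / (y + k + 1/2) ^ 2)) with hg'def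
  have hg : ∀ (k : ℕ) (y : ℝ), y ∈ Ioi (x/2) → HasDerivAt (g k) (g' k y) y := by
    intro k y hy
    have hy0 : 0 < y := lt_trans (half_pos hx) hy
    have h1 : y + (k:ℝ) ≠ 0 := by positivity
    have h2 : y + ((k:ℝ) + 1/2) ≠ 0 := by positivity
    have d1 := hasDerivAt_inv_aff h1
    have d2 := hasDerivAt_inv_aff (c := (k:ℝ) + 1/2) h2
    have := d1.sub d2
    simp only [hgdef, hg'def]
    refine HasDerivAt.congr_deriv (this.congr_of_eventuallyEq (Filter.Eventually.of_forall fun z => ?_)) ?_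
    · simp only [Pi.sub_apply]; ring
    · ring
  have hg' : ∀ (k : ℕ) (y : ℝ), y ∈ Ioi (x/2) → ‖g' k y‖ ≤ 1 / (x/2 + k)^2 := by
    intro k y hy
    have hy2 : x/2 < y := hy
    have hy0 : 0 < y := lt_trans (half_pos hx) hy
    have h1 : (0:ℝ) < y + k := by positivity
    have h3 : (0:ℝ) < y + k + 1/2 := by linarith
    have hle : 1 / (y + k)^2 - 1/(y+k+1/2)^2 ≤ 1/(x/2+k)^2 := by
      have e1 : 1 / (y + k)^2 ≤ 1/(x/2+k)^2 := by
        apply div_le_div_of_nonneg_left one_pos.le (by positivity)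
        have h4 : (0:ℝ) < x/2 + k := by positivity
        nlinarith
      have e2 : (0:ℝ) < 1/(y+k+1/2)^2 := by positivity
      linarith
    have hge : (0:ℝ) ≤ 1 / (y + k)^2 - 1/(y+k+1/2)^2 := by
      rw [sub_nonneg, div_le_div_iff₀ (by positivity) (by positivity)]
      nlinarith
    simp only [hg'def, neg_sub_neg, Real.norm_eq_abs]
    rw [abs_sub_comm, abs_of_nonneg hge]
    exact hle
  have hG0 : Summable (fun k => g k x) := summable_G hx
  have key := hasDerivAt_tsum_of_isPreconnected (summable_sq_shift (half_pos hx))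
    (isOpen_Ioi (a := x/2)) (convex_Ioi _).isPreconnected hg hg'
    (mem_Ioi.mpr (by linarith : x/2 < x)) hG0 (mem_Ioi.mpr (by linarith : x/2 < x))
  have hGeq : G = fun y : ℝ => ∑' k, g k y := rfl
  rw [hGeq]
  refine key.congr_deriv ?_
  rw [T, ← tsum_neg]
  congr 1 with k
  simp only [hg'def]
  ring


lemma diffGamma {x : ℝ} (hx : 0 < x) : DifferentiableAt ℝ Real.Gamma x :=
  Real.differentiableAt_Gamma (fun m => by
    have : (0:ℝ) ≤ m := Nat.cast_nonneg m
    intro h; rw [h] at hx; linarith)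

lemma hasDerivAt_logGamma {x : ℝ} (hx : 0 < x) :
    HasDerivAt (Real.log ∘ Real.Gamma) (digamma x) x := by
  have h := (Real.hasDerivAt_log (Real.Gamma_pos_of_pos hx).ne').comp x (diffGamma hx).hasDerivAt
  simpa [digamma, div_eq_mul_inv, mul_comm] using h

lemma digamma_mono {x y : ℝ} (hx : 0 < x) (hxy : x ≤ y) : digamma x ≤ digamma y := by
  have hy : 0 < y := lt_of_lt_of_le hx hxy
  have hd : ∀ {z : ℝ}, 0 < z → deriv (Real.log ∘ Real.Gamma) z = digamma z :=
    fun hz => (hasDerivAt_logGamma hz).deriv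
  have hmono := Real.convexOn_log_Gamma.monotoneOn_deriv
    (fun z hz => (hasDerivAt_logGamma (mem_Ioi.mp hz)).differentiableAt)
  calc digamma x = deriv (Real.log ∘ Real.Gamma) x := (hd hx).symm
  _ ≤ deriv (Real.log ∘ Real.Gamma) y := hmono (mem_Ioi.mpr hx) (mem_Ioi.mpr hy) hxy
  _ = digamma y := hd hy

lemma digamma_add_one {x : ℝ} (hx : 0 < x) : digamma (x + 1) = digamma x + 1 / x := by
  have h1 : HasDerivAt (fun y : ℝ => Real.Gamma (y + 1)) (deriv Real.Gamma (x + 1)) x :=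
    (diffGamma (by linarith)).hasDerivAt.comp_add_const
  have h2 : HasDerivAt (fun y : ℝ => y * Real.Gamma y)
      (1 * Real.Gamma x + x * deriv Real.Gamma x) x :=
    (hasDerivAt_id x).mul (diffGamma hx).hasDerivAt
  have heq : (fun y : ℝ => Real.Gamma (y + 1)) =ᶠ[nhds x] (fun y : ℝ => y * Real.Gamma y) := by
    filter_upwards [eventually_gt_nhds hx] with y hy
    exact Real.Gamma_add_one hy.ne'
  have h3 := h1.congr_of_eventuallyEq heq.symm
  have h4 : deriv Real.Gamma (x + 1) = Real.Gamma x + x * deriv Real.Gamma x := by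
    have := h3.unique h2
    linarith [this]
  have hΓx := (Real.Gamma_pos_of_pos hx).ne'
  have hΓx1 := (Real.Gamma_pos_of_pos (by linarith : (0:ℝ) < x + 1)).ne'
  rw [digamma, digamma, h4, Real.Gamma_add_one hx.ne']
  field_simp
  ring


lemma digamma_add_nat {x : ℝ} (hx : 0 < x) (n : ℕ) :
    digamma (x + n) = digamma x + ∑ k ∈ Finset.range n, 1 / (x + k) := by
  induction n with
  | zero => simp
  | succ n ih =>
    have h1 : (0:ℝ) < x + n := by positivity
    have : x + (n+1 : ℕ) = (x + n) + 1 := by push_cast; ring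
    rw [this, digamma_add_one h1, ih, Finset.sum_range_succ]
    ring

lemma G_eq_digamma {x : ℝ} (hx : 0 < x) : G x = digamma (x + 1/2) - digamma x := by
  have hS : ∀ n : ℕ, ∑ k ∈ Finset.range n, (1 / (x + k) - 1 / (x + k + 1/2))
      = (digamma (x + 1/2) - digamma x) - (digamma (x + n + 1/2) - digamma (x + n)) := by
    intro n
    have e1 := digamma_add_nat hx n
    have e2 := digamma_add_nat (by linarith : 0 < x + 1/2) n
    rw [Finset.sum_sub_distrib]
    have hsum2 : ∑ k ∈ Finset.range n, 1/(x+(k:ℝ)+1/2) = ∑ k ∈ Finset.range n, 1/(x+1/2+(k:ℝ)) :=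
      Finset.sum_congr rfl (fun k _ => by ring_nf)
    have e4 : digamma (x+1/2+(n:ℝ)) = digamma (x+(n:ℝ)+1/2) := by
      rw [show x+1/2+(n:ℝ) = x+(n:ℝ)+1/2 by ring]
    rw [e4] at e2
    linarith [e1, e2, hsum2]
  have hr0 : ∀ n : ℕ, 0 ≤ digamma (x + n + 1/2) - digamma (x + n) := by
    intro n
    have h1 : (0:ℝ) < x + n := by positivity
    linarith [digamma_mono h1 (by linarith : x + n ≤ x + n + 1/2)]
  have hr1 : ∀ n : ℕ, digamma (x + n + 1/2) - digamma (x + n) ≤ 1 / (x + n) := by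
    intro n
    have h1 : (0:ℝ) < x + n := by positivity
    have := digamma_mono (by linarith : (0:ℝ) < x + n + 1/2) (by linarith : x + n + 1/2 ≤ x + n + 1)
    have h2 := digamma_add_one h1
    linarith
  have htend : Tendsto (fun n : ℕ => digamma (x + n + 1/2) - digamma (x + n)) atTop (nhds 0) := by
    have hub : Tendsto (fun n : ℕ => 1 / (x + n)) atTop (nhds 0) := by
      have hat : Tendsto (fun n : ℕ => x + (n:ℝ)) atTop atTop :=
        tendsto_atTop_add_const_left atTop x tendsto_natCast_atTop_atTop
      exact (tendsto_inv_atTop_zero.comp hat).congr (fun n => by simp [one_div])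
    exact squeeze_zero hr0 hr1 hub
  have hlim : Tendsto (fun n : ℕ => ∑ k ∈ Finset.range n, (1 / (x + k) - 1 / (x + k + 1/2)))
      atTop (nhds (digamma (x + 1/2) - digamma x)) := by
    simp_rw [hS]
    simpa using tendsto_const_nhds.sub htend
  exact tendsto_nhds_unique ((summable_G hx).hasSum.tendsto_sum_nat) hlim


lemma phi_dec {x a b : ℝ} (hx : 0 < x) (hx2 : x ≤ 1/2) (ha : 1 ≤ a) (hab : a ≤ b) :
    b / (x + b)^2 ≤ a / (x + a)^2 := by
  have hxa : (0:ℝ) < x + a := by linarith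
  have hxb : (0:ℝ) < x + b := by linarith
  rw [div_le_div_iff₀ (by positivity) (by positivity)]
  have h3 : 0 ≤ b - a := by linarith
  have h2 : 1 ≤ a * b := by nlinarith
  have h1 : x^2 ≤ 1/4 := by nlinarith
  nlinarith [mul_le_mul_of_nonneg_left h1 h3, mul_le_mul_of_nonneg_left h2 h3,
    mul_nonneg h3 (mul_nonneg (by linarith : (0:ℝ) ≤ a) (by linarith : (0:ℝ) ≤ b))]

lemma key_ineq {x : ℝ} (hx : 0 < x) (hx2 : x ≤ 1/2) : G x < x * T x := by
  set d : ℕ → ℝ := fun k => ((k:ℝ)+1/2)/(x+k+1/2)^2 - (k:ℝ)/(x+k)^2 with hd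
  have hsd : Summable d := by
    have h := ((summable_T hx).mul_left x).sub (summable_G hx)
    apply h.congr
    intro k
    have h1 : (0:ℝ) < x + k := by positivity
    have h2 : (0:ℝ) < x + k + 1/2 := by linarith
    simp only [hd]
    field_simp
    ring
  have heq : x * T x - G x = ∑' k, d k := by
    rw [T, G, ← tsum_mul_left, ← Summable.tsum_sub ((summable_T hx).mul_left x) (summable_G hx)]
    congr 1 with k
    have h1 : (0:ℝ) < x + k := by positivity
    have h2 : (0:ℝ) < x + k + 1/2 := by linarith
    simp only [hd]
    field_simp
    ring
  have hshift : ∑' k, d k = d 0 + ∑' k, d (k+1) := Summable.tsum_eq_zero_add hsd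
  have hmono : ∀ k : ℕ, -(d (k+1)) ≤ ((k:ℝ)+1)/(x+k+1)^2 - ((k:ℝ)+2)/(x+k+2)^2 := by
    intro k
    have h := phi_dec hx hx2 (by linarith [Nat.cast_nonneg (α := ℝ) k] : 1 ≤ (k:ℝ)+3/2)
      (by linarith : (k:ℝ)+3/2 ≤ (k:ℝ)+2)
    simp only [hd]
    push_cast
    ring_nf at h ⊢
    linarith [h]
  have hnn : ∀ k : ℕ, 0 ≤ ((k:ℝ)+1)/(x+k+1)^2 - ((k:ℝ)+2)/(x+k+2)^2 := by
    intro k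
    have h := phi_dec hx hx2 (by linarith [Nat.cast_nonneg (α := ℝ) k] : 1 ≤ (k:ℝ)+1)
      (by linarith : (k:ℝ)+1 ≤ (k:ℝ)+2)
    ring_nf at h ⊢
    linarith [h]
  have hps : ∀ n : ℕ, ∑ k ∈ Finset.range n, (((k:ℝ)+1)/(x+k+1)^2 - ((k:ℝ)+2)/(x+k+2)^2)
      ≤ 1/(x+1)^2 := by
    intro n
    have tele := Finset.sum_range_sub' (f := fun k : ℕ => ((k:ℝ)+1)/(x+k+1)^2) n
    have e0 : ∑ k ∈ Finset.range n, (((k:ℝ)+1)/(x+k+1)^2 - ((k:ℝ)+2)/(x+k+2)^2)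
        = ∑ k ∈ Finset.range n, ((fun j : ℕ => ((j:ℝ)+1)/(x+j+1)^2) k
            - (fun j : ℕ => ((j:ℝ)+1)/(x+j+1)^2) (k+1)) :=
      Finset.sum_congr rfl (fun i _ => by push_cast; ring_nf)
    rw [e0, tele]
    have h1 : 0 ≤ ((n:ℝ)+1)/(x+n+1)^2 := by positivity
    have h2 : (((0:ℕ):ℝ)+1)/(x+((0:ℕ):ℝ)+1)^2 = 1/(x+1)^2 := by norm_num
    simp only [Nat.cast_zero] at *
    norm_num
    linarith
  have hsum2 : Summable (fun k : ℕ => ((k:ℝ)+1)/(x+k+1)^2 - ((k:ℝ)+2)/(x+k+2)^2) :=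
    summable_of_sum_range_le hnn hps
  have hsd1 : Summable (fun k : ℕ => d (k+1)) := (summable_nat_add_iff 1).mpr hsd
  have htail : ∑' k : ℕ, (-(d (k+1))) ≤ 1/(x+1)^2 :=
    le_trans (Summable.tsum_le_tsum hmono hsd1.neg hsum2) (Real.tsum_le_of_sum_range_le hnn hps)
  have htail2 : -(1/(x+1)^2) ≤ ∑' k : ℕ, d (k+1) := by
    rw [tsum_neg] at htail
    linarith
  have hd0 : d 0 = (1/2)/(x+1/2)^2 := by
    simp only [hd]
    norm_num
  have hfinal : (1/2)/(x+1/2)^2 - 1/(x+1)^2 > 0 := by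
    rw [gt_iff_lt, sub_pos, div_lt_div_iff₀ (by positivity) (by positivity)]
    nlinarith
  have : 0 < x * T x - G x := by
    rw [heq, hshift, hd0]
    linarith
  linarith


noncomputable def f (a : ℝ) : ℝ := Real.sin (π * a) / π * G (1 - a)

lemma hasDerivAt_f {a : ℝ} (ha : a ∈ Ioo (0:ℝ) 1) :
    HasDerivAt f (Real.cos (π * a) * G (1 - a) + Real.sin (π * a) / π * T (1 - a)) a := by
  have hx : 0 < 1 - a := by linarith [ha.2]
  have h1 : HasDerivAt (fun b : ℝ => Real.sin (π * b) / π) (Real.cos (π * a)) a := by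
    have hin : HasDerivAt (fun b : ℝ => π * b) π a := by
      simpa using (hasDerivAt_id a).const_mul π
    have hs : HasDerivAt (fun b : ℝ => Real.sin (π * b)) (Real.cos (π * a) * π) a :=
      (Real.hasDerivAt_sin (π * a)).comp a hin
    have := hs.div_const π
    refine this.congr_deriv ?_
    field_simp
  have h2 : HasDerivAt (fun b : ℝ => G (1 - b)) (T (1 - a)) a := by
    have hi : HasDerivAt (fun b : ℝ => 1 - b) (-1) a := (hasDerivAt_id a).const_sub 1
    have := (hasDerivAt_G hx).comp a hi
    refine this.congr_deriv ?_
    ring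
  have := h1.mul h2
  exact this

lemma deriv_f_pos {a : ℝ} (ha : a ∈ Ioo (0:ℝ) 1) :
    0 < Real.cos (π * a) * G (1 - a) + Real.sin (π * a) / π * T (1 - a) := by
  obtain ⟨ha0, ha1⟩ := ha
  have hx : 0 < 1 - a := by linarith
  have hsin : 0 < Real.sin (π * a) :=
    Real.sin_pos_of_pos_of_lt_pi (by positivity) (by nlinarith [pi_pos])
  rcases le_or_gt a (1/2) with hle | hgt
  · have hcos : 0 ≤ Real.cos (π * a) := by
      apply Real.cos_nonneg_of_mem_Icc
      constructor
      · nlinarith [pi_pos]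
      · nlinarith [pi_pos]
    have := G_pos hx
    have := T_pos hx
    have h3 : 0 < Real.sin (π * a) / π * T (1 - a) := by positivity
    nlinarith [mul_nonneg hcos (G_pos hx).le]
  · have hx2 : 1 - a < 1/2 := by linarith
    have hcosx : 0 < Real.cos (π * (1 - a)) := by
      apply Real.cos_pos_of_mem_Ioo
      constructor
      · nlinarith [pi_pos]
      · nlinarith [pi_pos]
    have hsin_eq : Real.sin (π * a) = Real.sin (π * (1 - a)) := by
      rw [show π * a = π - π * (1 - a) by ring, Real.sin_pi_sub]
    have hcos_eq : Real.cos (π * a) = -Real.cos (π * (1 - a)) := by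
      rw [show π * a = π - π * (1 - a) by ring, Real.cos_pi_sub]
    have htan : π * (1 - a) < Real.tan (π * (1 - a)) :=
      Real.lt_tan (by positivity) (by nlinarith [pi_pos])
    rw [Real.tan_eq_sin_div_cos, lt_div_iff₀ hcosx] at htan
    have hkey := key_ineq hx (le_of_lt hx2)
    have hT := T_pos hx
    have hG := G_pos hx
    have step1 : Real.cos (π * (1 - a)) * G (1 - a)
        < Real.cos (π * (1 - a)) * ((1 - a) * T (1 - a)) :=
      mul_lt_mul_of_pos_left hkey hcosx
    have step2 : π * (1 - a) * Real.cos (π * (1 - a)) * T (1 - a)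
        < Real.sin (π * (1 - a)) * T (1 - a) :=
      mul_lt_mul_of_pos_right htan hT
    have hpi := pi_pos
    rw [hsin_eq, hcos_eq, show -Real.cos (π * (1 - a)) * G (1 - a)
        + Real.sin (π * (1 - a)) / π * T (1 - a)
      = Real.sin (π * (1 - a)) / π * T (1 - a) - Real.cos (π * (1 - a)) * G (1 - a) by ring,
      sub_pos, div_mul_eq_mul_div, lt_div_iff₀ hpi]
    nlinarith


lemma strictMonoOn_f : StrictMonoOn f (Ioo (0:ℝ) 1) := by
  apply strictMonoOn_of_deriv_pos (convex_Ioo 0 1)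
  · exact fun a ha => (hasDerivAt_f ha).differentiableAt.continuousAt.continuousWithinAt
  · intro a ha
    rw [interior_Ioo] at ha
    rw [(hasDerivAt_f ha).deriv]
    exact deriv_f_pos ha

lemma f_pos {a : ℝ} (ha : a ∈ Ioo (0:ℝ) 1) : 0 < f a := by
  have hsin : 0 < Real.sin (π * a) :=
    Real.sin_pos_of_pos_of_lt_pi (by nlinarith [pi_pos, ha.1]) (by nlinarith [pi_pos, ha.2])
  have hG := G_pos (by linarith [ha.2] : 0 < 1 - a)
  have := pi_pos
  show 0 < Real.sin (π * a) / π * G (1 - a)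
  positivity

lemma G_continuousAt_one : ContinuousAt G 1 :=
  (hasDerivAt_G one_pos).differentiableAt.continuousAt

lemma tendsto_f_zero : Tendsto f (nhdsWithin 0 (Ioi 0)) (nhds 0) := by
  have h1 : Tendsto (fun a : ℝ => Real.sin (π * a) / π) (nhds 0) (nhds 0) := by
    have : ContinuousAt (fun a : ℝ => Real.sin (π * a) / π) 0 := by fun_prop
    have h0 : Real.sin (π * 0) / π = 0 := by simp
    simpa [h0] using this.tendsto
  have h2 : Tendsto (fun a : ℝ => G (1 - a)) (nhds 0) (nhds (G 1)) := by
    apply G_continuousAt_one.tendsto.comp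
    have : ContinuousAt (fun a : ℝ => 1 - a) 0 := by fun_prop
    simpa using this.tendsto
  have h3 : Tendsto f (nhds 0) (nhds (0 * G 1)) := h1.mul h2
  have h4 := h3.mono_left (nhdsWithin_le_nhds (s := Ioi (0:ℝ)))
  simpa using h4

lemma G_rec {x : ℝ} (hx : 0 < x) : G x = (1/x - 1/(x + 1/2)) + G (x + 1) := by
  have h := Summable.tsum_eq_zero_add (summable_G hx)
  rw [G, h]
  congr 1
  · norm_num
  · rw [G]
    apply tsum_congr
    intro k
    push_cast
    ring_nf

lemma tendsto_f_one : Tendsto f (nhdsWithin 1 (Iio 1)) (nhds 1) := by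
  have hslope : Tendsto (fun u : ℝ => Real.sin u / u) (nhdsWithin 0 {(0:ℝ)}ᶜ) (nhds 1) := by
    have h := hasDerivAt_iff_tendsto_slope.mp (Real.hasDerivAt_sin 0)
    rw [Real.cos_zero] at h
    apply h.congr
    intro u
    simp [slope_def_field]
  have hinner : Tendsto (fun a : ℝ => π * (1 - a)) (nhdsWithin 1 (Iio 1))
      (nhdsWithin 0 (Ioi 0)) := by
    rw [tendsto_nhdsWithin_iff]
    constructor
    · have hc : Continuous (fun a : ℝ => π * (1 - a)) := by fun_prop
      have h5 := (hc.tendsto 1).mono_left (nhdsWithin_le_nhds (s := Iio (1:ℝ)))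
      simpa using h5
    · filter_upwards [self_mem_nhdsWithin] with a ha
      have := pi_pos
      have h6 : 0 < 1 - a := by simp only [mem_Iio] at ha; linarith
      exact mem_Ioi.mpr (by positivity)
  have hA : Tendsto (fun a : ℝ => Real.sin (π * (1 - a)) / (π * (1 - a)))
      (nhdsWithin 1 (Iio 1)) (nhds 1) :=
    hslope.comp (hinner.mono_right (nhdsWithin_mono 0 (fun u hu => ne_of_gt hu)))
  have hb1 : Tendsto (fun a : ℝ => Real.sin (π * a) / π) (nhds 1) (nhds 0) := by
    have hc : Continuous (fun a : ℝ => Real.sin (π * a) / π) := by fun_prop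
    have := hc.tendsto 1
    simpa using this
  have hb2 : Tendsto (fun a : ℝ => G (2 - a)) (nhds 1) (nhds (G 1)) := by
    apply G_continuousAt_one.tendsto.comp
    have hc : Continuous (fun a : ℝ => 2 - a) := by fun_prop
    have h7 := hc.tendsto 1
    norm_num at h7
    exact h7
  have hb3 : Tendsto (fun a : ℝ => 1 / (3/2 - a)) (nhds 1) (nhds 2) := by
    have hc : ContinuousAt (fun a : ℝ => 1 / (3/2 - a)) 1 := by
      apply ContinuousAt.div continuousAt_const (by fun_prop)
      norm_num
    have := hc.tendsto
    norm_num at this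
    convert this using 2
    norm_num
  have hB : Tendsto (fun a : ℝ => Real.sin (π * a) / π * (G (2 - a) - 1 / (3/2 - a)))
      (nhdsWithin 1 (Iio 1)) (nhds 0) := by
    have := (hb1.mul (hb2.sub hb3)).mono_left (nhdsWithin_le_nhds (s := Iio (1:ℝ)))
    simpa using this
  have heq : (fun a : ℝ => Real.sin (π * (1 - a)) / (π * (1 - a))
      + Real.sin (π * a) / π * (G (2 - a) - 1 / (3/2 - a))) =ᶠ[nhdsWithin 1 (Iio 1)] f := by
    filter_upwards [Ioo_mem_nhdsLT_of_mem (show (1:ℝ) ∈ Ioc (1/2 : ℝ) 1 by norm_num)] with a ha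
    have hx : 0 < 1 - a := by linarith [ha.2]
    have hx3 : 0 < 3/2 - a := by linarith
    have hsin_eq : Real.sin (π * a) = Real.sin (π * (1 - a)) := by
      rw [show π * a = π - π * (1 - a) by ring, Real.sin_pi_sub]
    show _ = Real.sin (π * a) / π * G (1 - a)
    rw [G_rec hx, show 1 - a + 1/2 = 3/2 - a by ring, show 1 - a + 1 = 2 - a by ring, hsin_eq]
    have hπ := pi_ne_zero
    field_simp
    ring
  have := (hA.add hB).congr' heq
  simpa using this


lemma f_lt_one {a : ℝ} (ha : a ∈ Ioo (0:ℝ) 1) : f a < 1 := by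
  obtain ⟨ha0, ha1⟩ := ha
  set b := (a + 1) / 2 with hb
  have hab : a < b := by rw [hb]; linarith
  have hbmem : b ∈ Ioo (0:ℝ) 1 := ⟨by rw [hb]; linarith, by rw [hb]; linarith⟩
  have h1 : f a < f b := strictMonoOn_f ⟨ha0, ha1⟩ hbmem hab
  have h2 : f b ≤ 1 := by
    apply ge_of_tendsto tendsto_f_one
    filter_upwards [Ioo_mem_nhdsLT_of_mem (show (1:ℝ) ∈ Ioc b 1 from ⟨hbmem.2, le_refl 1⟩)]
      with c hc
    exact (strictMonoOn_f hbmem ⟨lt_trans hbmem.1 hc.1, hc.2⟩ hc.1).le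
  linarith

lemma image_f : f '' (Ioo (0:ℝ) 1) = Ioo (0:ℝ) 1 := by
  apply Subset.antisymm
  · rintro y ⟨a, ha, rfl⟩
    exact ⟨f_pos ha, f_lt_one ha⟩
  · rintro y ⟨hy0, hy1⟩
    have hev0 : ∀ᶠ a in nhdsWithin 0 (Ioi (0:ℝ)), f a < y ∧ a ∈ Ioo (0:ℝ) 1 :=
      (tendsto_f_zero.eventually_lt_const hy0).and
        (Ioo_mem_nhdsGT_of_mem (show (0:ℝ) ∈ Ico (0:ℝ) 1 by norm_num))
    obtain ⟨a, hfa, hamem⟩ := hev0.exists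
    have hev1 : ∀ᶠ b in nhdsWithin 1 (Iio (1:ℝ)), y < f b ∧ b ∈ Ioo a 1 :=
      (tendsto_f_one.eventually_const_lt hy1).and
        (Ioo_mem_nhdsLT_of_mem (show (1:ℝ) ∈ Ioc a 1 from ⟨hamem.2, le_refl 1⟩))
    obtain ⟨b, hfb, hbmem⟩ := hev1.exists
    have hbmem' : b ∈ Ioo (0:ℝ) 1 := ⟨lt_trans hamem.1 hbmem.1, hbmem.2⟩
    have hcont : ContinuousOn f (Icc a b) := by
      intro c hc
      have hcmem : c ∈ Ioo (0:ℝ) 1 := ⟨lt_of_lt_of_le hamem.1 hc.1, lt_of_le_of_lt hc.2 hbmem'.2⟩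
      exact (hasDerivAt_f hcmem).differentiableAt.continuousAt.continuousWithinAt
    have hsub := intermediate_value_Ioo hbmem.1.le hcont
    obtain ⟨c, hc, hfc⟩ := hsub ⟨hfa, hfb⟩
    exact ⟨c, ⟨lt_trans hamem.1 hc.1, lt_trans hc.2 hbmem'.2⟩, hfc⟩


lemma Beta_eq {a : ℝ} (ha : a ∈ Ioo (0:ℝ) 1) : Beta a (1 - a) = π / Real.sin (π * a) := by
  rw [Beta, show a + (1 - a) = 1 by ring, Real.Gamma_one, div_one,
    Real.Gamma_mul_Gamma_one_sub]

lemma betaFn_eq_f {a : ℝ} (ha : a ∈ Ioo (0:ℝ) 1) : betaFn a = f a := by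
  have hsin : 0 < Real.sin (π * a) :=
    Real.sin_pos_of_pos_of_lt_pi (by nlinarith [pi_pos, ha.1]) (by nlinarith [pi_pos, ha.2])
  have hx : 0 < 1 - a := by linarith [ha.2]
  rw [betaFn, Beta_eq ha, f, G_eq_digamma hx, show 1 - a + 1/2 = 3/2 - a by ring]
  rw [div_div_eq_mul_div, div_mul_eq_mul_div, mul_comm]

lemma digamma_one : digamma 1 = -Real.eulerMascheroniConstant := by
  rw [digamma, Real.hasDerivAt_Gamma_one.deriv, Real.Gamma_one, div_one]

lemma digamma_half : digamma (1/2) = -(Real.eulerMascheroniConstant + 2 * Real.log 2) := by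
  have h := Real.hasDerivAt_Gamma_one_half.deriv
  rw [digamma, h, Real.Gamma_one_half_eq]
  have hs : Real.sqrt π ≠ 0 := (Real.sqrt_pos.mpr pi_pos).ne'
  field_simp

lemma betaFn_half : betaFn (1/2) = Real.log 4 / π := by
  have h32 : (3:ℝ)/2 - 1/2 = 1 := by norm_num
  have h11 : (1:ℝ) - 1/2 = 1/2 := by norm_num
  rw [betaFn, h32, h11, digamma_one, digamma_half, Beta, show (1:ℝ)/2 + 1/2 = 1 by norm_num,
    Real.Gamma_one, div_one, Real.Gamma_one_half_eq, Real.mul_self_sqrt pi_pos.le]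
  rw [show (4:ℝ) = 2^(2:ℕ) by norm_num, Real.log_pow]
  push_cast
  ring

theorem stmt6 :
    StrictMonoOn betaFn (Set.Ioo 0 1) ∧
    betaFn '' (Set.Ioo 0 1) = Set.Ioo 0 1 ∧
    betaFn (1 / 2) = Real.log 4 / Real.pi := by
  refine ⟨?_, ?_, betaFn_half⟩
  · intro x hx y hy hxy
    rw [betaFn_eq_f hx, betaFn_eq_f hy]
    exact strictMonoOn_f hx hy hxy
  · rw [Set.image_congr (fun a ha => betaFn_eq_f ha), image_f]
end

section
/- For every r ∈ (0,1), lim_{a→0⁺} ∂/∂a [₂F₁(a, 1−a; 1; r)] = log(1/(1−r)), and lim_{a→1⁻} ∂/∂a [₂F₁(a, 1−a; 1; r)] = −log(1/(1−r)). -/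
open Real Filter Set

noncomputable def pd : ℕ → ℝ → ℝ
  | 0, _ => 0
  | n+1, a => pd n a * (a + n) + poch a n

lemma poch_zero (a : ℝ) : poch a 0 = 1 := by simp [poch]

lemma poch_succ (a : ℝ) (n : ℕ) : poch a (n+1) = poch a n * (a + n) := by
  simp [poch, ascPochhammer_succ_right, Polynomial.eval_mul]

lemma poch_one (n : ℕ) : poch 1 n = n.factorial := by
  induction n with
  | zero => simp [poch_zero]
  | succ n ih => rw [poch_succ, ih, Nat.factorial_succ]; push_cast; ring

lemma poch_zero_eval (n : ℕ) : poch 0 (n+1) = 0 := by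
  induction n with
  | zero => simp [poch_succ, poch_zero]
  | succ n ih => rw [poch_succ, ih]; ring

lemma pd_succ_zero (n : ℕ) : pd (n+1) 0 = n.factorial := by
  induction n with
  | zero => simp [pd, poch_zero]
  | succ n ih => rw [show pd (n+2) 0 = pd (n+1) 0 * (0 + ((n+1:ℕ):ℝ)) + poch 0 (n+1) from rfl,
      ih, poch_zero_eval, Nat.factorial_succ]; push_cast; ring

lemma hasDerivAt_poch (n : ℕ) (a : ℝ) : HasDerivAt (fun x => poch x n) (pd n a) a := by
  induction n with
  | zero =>
    simp only [poch_zero]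
    exact hasDerivAt_const a 1
  | succ n ih =>
    have h2 : HasDerivAt (fun x : ℝ => x + (n:ℝ)) 1 a := (hasDerivAt_id a).add_const _
    have : HasDerivAt (fun x => poch x n * (x + n)) (pd n a * (a + n) + poch a n * 1) a := ih.mul h2
    simp only [poch_succ]
    convert this using 1
    show pd n a * (a + n) + poch a n = pd n a * (a + n) + poch a n * 1
    ring

lemma continuous_pd (n : ℕ) : Continuous (pd n) := by
  induction n with
  | zero => exact continuous_const
  | succ n ih =>
    show Continuous (fun a => pd n a * (a + n) + poch a n)
    exact (ih.mul (continuous_id.add continuous_const)).add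
      ((ascPochhammer ℝ n).continuous_aeval)

lemma continuous_poch (n : ℕ) : Continuous (fun a : ℝ => poch a n) :=
  (ascPochhammer ℝ n).continuous_aeval

lemma poch_pd_bound (n : ℕ) (a : ℝ) (ha : |a| ≤ 2) :
    |poch a n| ≤ (n+1).factorial ∧ |pd n a| ≤ n * (n+1).factorial := by
  induction n with
  | zero =>
    constructor
    · rw [poch_zero]; norm_num
    · show |(0:ℝ)| ≤ _; norm_num
  | succ n ih =>
    obtain ⟨h1, h2⟩ := ih
    have han : |a + n| ≤ (n:ℝ) + 2 := by
      calc |a + n| ≤ |a| + |(n:ℝ)| := abs_add_le _ _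
        _ ≤ 2 + n := by rw [abs_of_nonneg (by positivity : (0:ℝ) ≤ (n:ℝ))]; linarith
        _ = (n:ℝ) + 2 := by ring
    have hfact : ((n+2).factorial : ℝ) = ((n:ℝ) + 2) * (n+1).factorial := by
      rw [show n + 2 = (n+1) + 1 from rfl, Nat.factorial_succ]; push_cast; ring
    have hfpos : (0:ℝ) ≤ ((n+1).factorial : ℝ) := by positivity
    have hb1 : |poch a (n+1)| ≤ ((n+1)+1).factorial := by
      rw [poch_succ]
      calc |poch a n * (a + n)| = |poch a n| * |a + n| := abs_mul _ _
        _ ≤ ((n+1).factorial : ℝ) * ((n:ℝ) + 2) :=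
          mul_le_mul h1 han (abs_nonneg _) hfpos
        _ = ((n+2).factorial : ℝ) := by rw [hfact]; ring
    refine ⟨hb1, ?_⟩
    have hstep : |pd (n+1) a| ≤ |pd n a| * |a + n| + |poch a n| := by
      show |pd n a * (a + n) + poch a n| ≤ _
      calc |pd n a * (a + n) + poch a n| ≤ |pd n a * (a + n)| + |poch a n| := abs_add_le _ _
        _ = |pd n a| * |a + n| + |poch a n| := by rw [abs_mul]
    calc |pd (n+1) a| ≤ |pd n a| * |a + n| + |poch a n| := hstep
      _ ≤ (n * (n+1).factorial) * ((n:ℝ) + 2) + (n+1).factorial := by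
        have := mul_le_mul h2 han (abs_nonneg _) (by positivity)
        linarith
      _ ≤ ((n+1:ℕ):ℝ) * (((n+1)+1).factorial : ℕ) := by
        rw [show (n+1)+1 = n+2 from rfl, hfact]
        push_cast
        nlinarith [hfpos]

noncomputable def cfun (r : ℝ) (n : ℕ) (a : ℝ) : ℝ :=
  poch a n * poch (1-a) n / (poch 1 n * n.factorial) * r ^ n

noncomputable def efun (r : ℝ) (n : ℕ) (a : ℝ) : ℝ :=
  (pd n a * poch (1-a) n + poch a n * (pd n (1-a) * (-1))) / (poch 1 n * n.factorial) * r ^ n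

lemma hasDerivAt_cfun (r : ℝ) (n : ℕ) (a : ℝ) :
    HasDerivAt (cfun r n) (efun r n a) a := by
  have hneg : HasDerivAt (fun x : ℝ => 1 - x) (-1) a := by
    simpa using (hasDerivAt_id a).const_sub 1
  have h2 : HasDerivAt (fun x => poch (1-x) n) (pd n (1-a) * (-1)) a :=
    (hasDerivAt_poch n (1-a)).comp a hneg
  have h3 := (hasDerivAt_poch n a).mul h2
  have h4 := (h3.div_const (poch 1 n * n.factorial)).mul_const (r ^ n)
  exact h4

lemma efun_bound {r : ℝ} (hr0 : 0 ≤ r) (n : ℕ) (y : ℝ) (hy : y ∈ Set.Ioo (-1:ℝ) 2) :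
    ‖efun r n y‖ ≤ 2 * (n:ℝ) * ((n:ℝ)+1)^2 * r ^ n := by
  obtain ⟨hy1, hy2⟩ := hy
  have ha : |y| ≤ 2 := abs_le.2 ⟨by linarith, by linarith⟩
  have hb : |1 - y| ≤ 2 := abs_le.2 ⟨by linarith, by linarith⟩
  obtain ⟨p1, d1⟩ := poch_pd_bound n y ha
  obtain ⟨p2, d2⟩ := poch_pd_bound n (1-y) hb
  have hfpos : (0:ℝ) < (n.factorial : ℝ) := by positivity
  have hfs : ((n+1).factorial : ℝ) = ((n:ℝ)+1) * n.factorial := by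
    rw [Nat.factorial_succ]; push_cast; ring
  have hnum : |pd n y * poch (1-y) n + poch y n * (pd n (1-y) * (-1))|
      ≤ 2 * (n:ℝ) * ((n:ℝ)+1)^2 * ((n.factorial : ℝ) * n.factorial) := by
    have e1 : |pd n y * poch (1-y) n| ≤ ((n:ℝ) * (n+1).factorial) * ((n+1).factorial : ℝ) := by
      rw [abs_mul]
      exact mul_le_mul d1 p2 (abs_nonneg _) (by positivity)
    have e2 : |poch y n * (pd n (1-y) * (-1))| ≤ ((n+1).factorial : ℝ) * ((n:ℝ) * (n+1).factorial) := by
      rw [abs_mul, abs_mul, abs_neg, abs_one, mul_one]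
      exact mul_le_mul p1 d2 (abs_nonneg _) (by positivity)
    calc |pd n y * poch (1-y) n + poch y n * (pd n (1-y) * (-1))|
        ≤ |pd n y * poch (1-y) n| + |poch y n * (pd n (1-y) * (-1))| := abs_add_le _ _
      _ ≤ ((n:ℝ) * (n+1).factorial) * ((n+1).factorial : ℝ)
          + ((n+1).factorial : ℝ) * ((n:ℝ) * (n+1).factorial) := by linarith
      _ = 2 * (n:ℝ) * ((n:ℝ)+1)^2 * ((n.factorial : ℝ) * n.factorial) := by
          rw [hfs]; ring
  have hden : (0:ℝ) < (n.factorial : ℝ) * n.factorial := by positivity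
  rw [Real.norm_eq_abs]
  unfold efun
  rw [poch_one, abs_mul, abs_div, abs_of_nonneg (pow_nonneg hr0 n), abs_of_pos hden]
  calc |pd n y * poch (1-y) n + poch y n * (pd n (1-y) * (-1))| / ((n.factorial : ℝ) * n.factorial) * r ^ n
      ≤ (2 * (n:ℝ) * ((n:ℝ)+1)^2 * ((n.factorial : ℝ) * n.factorial)) / ((n.factorial : ℝ) * n.factorial) * r ^ n := by
        gcongr
    _ = 2 * (n:ℝ) * ((n:ℝ)+1)^2 * r ^ n := by
        rw [mul_div_assoc, div_self (ne_of_gt hden), mul_one]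

lemma summable_u {r : ℝ} (hr : |r| < 1) :
    Summable (fun n : ℕ => 2 * (n:ℝ) * ((n:ℝ)+1)^2 * r ^ n) := by
  have h3 := summable_pow_mul_geometric_of_norm_lt_one (R := ℝ) 3 (by rwa [Real.norm_eq_abs])
  have h2 := summable_pow_mul_geometric_of_norm_lt_one (R := ℝ) 2 (by rwa [Real.norm_eq_abs])
  have h1 := summable_pow_mul_geometric_of_norm_lt_one (R := ℝ) 1 (by rwa [Real.norm_eq_abs])
  have := ((h3.mul_left 2).add (h2.mul_left 4)).add (h1.mul_left 2)
  exact this.congr (fun n => by ring)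

lemma summable_cfun0 (r : ℝ) : Summable (fun n => cfun r n 0) := by
  apply summable_of_ne_finset_zero (s := ({0} : Finset ℕ))
  intro n hn
  obtain ⟨m, rfl⟩ := Nat.exists_eq_succ_of_ne_zero (by simpa using hn)
  simp [cfun, poch_zero_eval]

lemma efun_at_zero (r : ℝ) (n : ℕ) : efun r n 0 = r ^ n / n := by
  cases n with
  | zero => simp [efun, pd, poch_zero]
  | succ m =>
    have hm : ((m+1).factorial : ℝ) = ((m:ℝ)+1) * m.factorial := by
      rw [Nat.factorial_succ]; push_cast; ring
    have hm0 : (m.factorial : ℝ) ≠ 0 := by positivity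
    unfold efun
    rw [show (1:ℝ) - 0 = 1 by norm_num, pd_succ_zero, poch_zero_eval, poch_one, hm]
    push_cast
    field_simp
    ring

lemma efun_at_one (r : ℝ) (n : ℕ) : efun r n 1 = -(r ^ n / n) := by
  cases n with
  | zero => simp [efun, pd, poch_zero]
  | succ m =>
    have hm : ((m+1).factorial : ℝ) = ((m:ℝ)+1) * m.factorial := by
      rw [Nat.factorial_succ]; push_cast; ring
    have hm0 : (m.factorial : ℝ) ≠ 0 := by positivity
    unfold efun
    rw [show (1:ℝ) - 1 = 0 by norm_num, pd_succ_zero, poch_zero_eval, poch_one, hm]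
    push_cast
    field_simp
    ring

lemma hasSum_logser {r : ℝ} (h : |r| < 1) :
    HasSum (fun n : ℕ => r ^ n / n) (Real.log (1/(1-r))) := by
  have H := Real.hasSum_pow_div_log_of_abs_lt_one h
  have H2 : HasSum (fun n : ℕ => r ^ (n+1) / ((n+1 : ℕ) : ℝ)) (-Real.log (1-r)) := by
    refine H.congr_fun fun n => ?_
    push_cast
    ring
  rw [one_div, Real.log_inv]
  have := (hasSum_nat_add_iff (f := fun n : ℕ => r ^ n / (n:ℝ)) 1).1 H2
  simpa using this

theorem stmt11 (r : ℝ) (hr : r ∈ Set.Ioo (0 : ℝ) 1) :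
    Filter.Tendsto (fun a : ℝ => deriv (fun a' : ℝ => hyp a' (1 - a') 1 r) a)
      (nhdsWithin 0 (Set.Ioi 0)) (nhds (Real.log (1 / (1 - r)))) ∧
    Filter.Tendsto (fun a : ℝ => deriv (fun a' : ℝ => hyp a' (1 - a') 1 r) a)
      (nhdsWithin 1 (Set.Iio 1)) (nhds (-Real.log (1 / (1 - r)))) := by
  obtain ⟨hrpos, hr1⟩ := hr
  have hr0' : 0 ≤ r := le_of_lt hrpos
  have hra : |r| < 1 := abs_lt.2 ⟨by linarith, hr1⟩
  have h0s : (0:ℝ) ∈ Set.Ioo (-1:ℝ) 2 := by constructor <;> norm_num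
  have h1s : (1:ℝ) ∈ Set.Ioo (-1:ℝ) 2 := by constructor <;> norm_num
  have hkey : ∀ y ∈ Set.Ioo (-1:ℝ) 2,
      HasDerivAt (fun a => ∑' n, cfun r n a) (∑' n, efun r n y) y := fun y hy =>
    hasDerivAt_tsum_of_isPreconnected (summable_u hra) isOpen_Ioo
      (convex_Ioo _ _).isPreconnected (fun n z _ => hasDerivAt_cfun r n z)
      (fun n z hz => efun_bound hr0' n z hz) h0s (summable_cfun0 r) hy
  have hfun : (fun a' : ℝ => hyp a' (1 - a') 1 r) = fun a => ∑' n, cfun r n a := rfl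
  have hde : ∀ y ∈ Set.Ioo (-1:ℝ) 2,
      deriv (fun a' : ℝ => hyp a' (1 - a') 1 r) y = ∑' n, efun r n y := by
    intro y hy
    rw [hfun]
    exact (hkey y hy).deriv
  have hcontfn : ∀ n : ℕ, Continuous (efun r n) := by
    intro n
    unfold efun
    exact ((((continuous_pd n).mul ((continuous_poch n).comp
      (continuous_const.sub continuous_id))).add ((continuous_poch n).mul
      ((((continuous_pd n).comp (continuous_const.sub continuous_id))).mul
      continuous_const))).div_const _).mul continuous_const
  have hcont : ContinuousOn (fun y => ∑' n, efun r n y) (Set.Ioo (-1:ℝ) 2) :=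
    continuousOn_tsum (fun n => (hcontfn n).continuousOn) (summable_u hra)
      (fun n y hy => efun_bound hr0' n y hy)
  constructor
  · have hval0 : (∑' n, efun r n 0) = Real.log (1/(1-r)) := by
      have he : (fun n : ℕ => efun r n 0) = fun n : ℕ => r ^ n / n :=
        funext (efun_at_zero r)
      rw [he]
      exact (hasSum_logser hra).tsum_eq
    have hc0 : ContinuousAt (fun y => ∑' n, efun r n y) 0 :=
      hcont.continuousAt (isOpen_Ioo.mem_nhds h0s)
    have T : Tendsto (fun y => ∑' n, efun r n y) (nhdsWithin 0 (Set.Ioi 0))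
        (nhds (Real.log (1/(1-r)))) := by
      rw [← hval0]
      exact hc0.tendsto.mono_left nhdsWithin_le_nhds
    refine T.congr' ?_
    exact Filter.eventually_of_mem (nhdsWithin_le_nhds (isOpen_Ioo.mem_nhds h0s))
      (fun y hy => (hde y hy).symm)
  · have hval1 : (∑' n, efun r n 1) = -Real.log (1/(1-r)) := by
      have he : (fun n : ℕ => efun r n 1) = fun n : ℕ => -(r ^ n / n) :=
        funext (efun_at_one r)
      rw [he]
      exact ((hasSum_logser hra).neg).tsum_eq
    have hc1 : ContinuousAt (fun y => ∑' n, efun r n y) 1 :=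
      hcont.continuousAt (isOpen_Ioo.mem_nhds h1s)
    have T : Tendsto (fun y => ∑' n, efun r n y) (nhdsWithin 1 (Set.Iio 1))
        (nhds (-Real.log (1/(1-r)))) := by
      rw [← hval1]
      exact hc1.tendsto.mono_left nhdsWithin_le_nhds
    refine T.congr' ?_
    exact Filter.eventually_of_mem (nhdsWithin_le_nhds (isOpen_Ioo.mem_nhds h1s))
      (fun y hy => (hde y hy).symm)
end
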